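/- Let n, k be integers with 1 ≤ k and 2k ≤ n. Then the complex dimension of A⁰_{n,k} equals C(n,k) − C(n,k−1), where C(a,b) denotes the binomial coefficient (this is the dimension of the irreducible representation of S_n indexed by the two-row Young diagram (n−k,k)). -/

import Mathlib

open MvPolynomial Finset

noncomputable section

/-- The "square-free monomial" `x_I = ∏_{i ∈ I} x_i`. -/
def xI (n : ℕ) (I : Finset (Fin n)) : MvPolynomial (Fin n) ℂ := ∏ i ∈ I, X i

/-- `A_{n,k}`: the span of the square-free monomials of degree `k`. -/
def Aspace (n k : ℕ) : Submodule ℂ (MvPolynomial (Fin n) ℂ) :=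
  Submodule.span ℂ {f | ∃ I : Finset (Fin n), I.card = k ∧ f = xI n I}

/-- The coefficient `c_I` of the monomial `x_I` in `f`. -/
def coeffI {n : ℕ} (f : MvPolynomial (Fin n) ℂ) (I : Finset (Fin n)) : ℂ :=
  MvPolynomial.coeff (∑ i ∈ I, Finsupp.single i 1) f

/-- `A⁰_{n,k}`: elements `∑ c_I x_I` of `A_{n,k}` with `∑_{j ∉ J} c_{J ∪ {j}} = 0`
for every `(k-1)`-element subset `J`. -/
def A0space (n k : ℕ) : Submodule ℂ (MvPolynomial (Fin n) ℂ) where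
  carrier := {f | f ∈ Aspace n k ∧ ∀ J : Finset (Fin n), J.card = k - 1 →
    ∑ j ∈ Jᶜ, coeffI f (insert j J) = 0}
  add_mem' := by
    rintro f g ⟨hf1, hf2⟩ ⟨hg1, hg2⟩
    refine ⟨Submodule.add_mem _ hf1 hg1, fun J hJ => ?_⟩
    have h1 := hf2 J hJ
    have h2 := hg2 J hJ
    simp only [coeffI] at h1 h2 ⊢
    simp only [coeff_add]
    rw [Finset.sum_add_distrib, h1, h2, add_zero]
  zero_mem' := by
    refine ⟨Submodule.zero_mem _, fun J hJ => ?_⟩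
    simp [coeffI]
  smul_mem' := by
    rintro c f ⟨hf1, hf2⟩
    refine ⟨Submodule.smul_mem _ c hf1, fun J hJ => ?_⟩
    have h1 := hf2 J hJ
    simp only [coeffI] at h1 ⊢
    simp only [coeff_smul, smul_eq_mul]
    rw [← Finset.mul_sum, h1, mul_zero]

/-- `ψ_n^l`, the linear map sending the square-free monomial `x_I` to
`x_I · ∑_S x_S`, the sum over all `l`-element subsets `S` of `{1,…,n} \ I`. -/
def psi (n l : ℕ) : MvPolynomial (Fin n) ℂ →ₗ[ℂ] MvPolynomial (Fin n) ℂ :=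
  ∑ S ∈ Finset.univ.filter (fun S : Finset (Fin n) => S.card = l),
    (LinearMap.mulRight ℂ (xI n S)).comp
      (aeval (fun i : Fin n => if i ∈ S then 0 else X i) :
        MvPolynomial (Fin n) ℂ →ₐ[ℂ] MvPolynomial (Fin n) ℂ).toLinearMap

/-- `H^k_{n,m} = ψ_n^{m-k}(A⁰_{n,k})`. -/
def Hspace (n m k : ℕ) : Submodule ℂ (MvPolynomial (Fin n) ℂ) :=
  (A0space n k).map (psi n (m - k))

/-- The squared norm of a form: the monomials `x_I` are an orthonormal basis. -/
def sqNorm {n : ℕ} (f : MvPolynomial (Fin n) ℂ) : ℝ :=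
  ∑ d ∈ f.support, Complex.normSq (f.coeff d)

/-- The inner product of two forms: the monomials `x_I` are an orthonormal basis. -/
def pInner {n : ℕ} (f g : MvPolynomial (Fin n) ℂ) : ℂ :=
  ∑ d ∈ f.support, f.coeff d * (starRingEnd ℂ) (g.coeff d)

namespace A0Aux

variable {n : ℕ}

/-- Functions on `k`-subsets. -/
abbrev Vs (n i : ℕ) := {S : Finset (Fin n) // S.card = i} → ℂ

def extF (n i : ℕ) (c : Vs n i) (S : Finset (Fin n)) : ℂ :=
  if h : S.card = i then c ⟨S, h⟩ else 0

lemma extF_add (i : ℕ) (c d : Vs n i) (S : Finset (Fin n)) :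
    extF n i (c + d) S = extF n i c S + extF n i d S := by
  unfold extF; split <;> simp

lemma extF_smul (i : ℕ) (a : ℂ) (c : Vs n i) (S : Finset (Fin n)) :
    extF n i (a • c) S = a * extF n i c S := by
  unfold extF; split <;> simp

lemma extF_of_card (i : ℕ) (c : Vs n i) (S : Finset (Fin n)) (h : S.card = i) :
    extF n i c S = c ⟨S, h⟩ := dif_pos h

def Dm (n i : ℕ) : Vs n (i + 1) →ₗ[ℂ] Vs n i where
  toFun x J := ∑ j ∈ J.1ᶜ, extF n (i + 1) x (insert j J.1)
  map_add' x y := funext fun J => by simp [extF_add, Finset.sum_add_distrib]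
  map_smul' a x := funext fun J => by simp [extF_smul, Finset.mul_sum]

def Um (n i : ℕ) : Vs n i →ₗ[ℂ] Vs n (i + 1) where
  toFun c I := ∑ j ∈ I.1, extF n i c (I.1.erase j)
  map_add' x y := funext fun J => by simp [extF_add, Finset.sum_add_distrib]
  map_smul' a x := funext fun J => by simp [extF_smul, Finset.mul_sum]

lemma base_rel (x : Vs n 0) : Dm n 0 (Um n 0 x) = (n : ℂ) • x := by
  funext J
  obtain ⟨J, hJ⟩ := J
  rw [Finset.card_eq_zero] at hJ
  subst hJ
  show ∑ j ∈ (∅ : Finset (Fin n))ᶜ, extF n 1 (Um n 0 x) (insert j (∅ : Finset (Fin n)))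
      = (n : ℂ) * x ⟨∅, rfl⟩
  have h1 : ∀ j : Fin n, extF n 1 (Um n 0 x) (insert j (∅ : Finset (Fin n))) = x ⟨∅, rfl⟩ := by
    intro j
    rw [extF_of_card _ _ _ (by simp)]
    show ∑ m ∈ insert j (∅ : Finset (Fin n)),
        extF n 0 x ((insert j (∅ : Finset (Fin n))).erase m) = _
    rw [Finset.sum_insert (Finset.notMem_empty j), Finset.sum_empty,
      Finset.erase_insert (Finset.notMem_empty j), extF_of_card _ _ _ (by simp), add_zero]
  rw [Finset.sum_congr rfl (fun j _ => h1 j)]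
  simp [Finset.card_compl, Finset.card_univ]

lemma comm_rel (j : ℕ) (hj : j + 1 ≤ n) (x : Vs n (j + 1)) :
    Dm n (j + 1) (Um n (j + 1) x)
      = Um n j (Dm n j x) + (((n : ℂ) - 2 * (j + 1)) • x) := by
  funext I
  obtain ⟨I, hI⟩ := I
  show ∑ l ∈ Iᶜ, extF n (j + 2) (Um n (j + 1) x) (insert l I)
      = (∑ m ∈ I, extF n j (Dm n j x) (I.erase m)) + ((n : ℂ) - 2 * (j + 1)) * x ⟨I, hI⟩
  have hL : ∀ l ∈ Iᶜ, extF n (j + 2) (Um n (j + 1) x) (insert l I)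
      = x ⟨I, hI⟩ + ∑ m ∈ I, extF n (j + 1) x (insert l (I.erase m)) := by
    intro l hl
    rw [Finset.mem_compl] at hl
    rw [extF_of_card _ _ _ (by rw [Finset.card_insert_of_notMem hl, hI])]
    show ∑ m ∈ insert l I, extF n (j + 1) x ((insert l I).erase m) = _
    rw [Finset.sum_insert hl, Finset.erase_insert hl, extF_of_card _ _ _ hI]
    congr 1
    refine Finset.sum_congr rfl fun m hm => ?_
    rw [Finset.erase_insert_of_ne (show l ≠ m by rintro rfl; exact hl hm)]
  have hR : ∀ m ∈ I, extF n j (Dm n j x) (I.erase m)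
      = x ⟨I, hI⟩ + ∑ l ∈ Iᶜ, extF n (j + 1) x (insert l (I.erase m)) := by
    intro m hm
    rw [extF_of_card _ _ _ (by rw [Finset.card_erase_of_mem hm, hI]; rfl)]
    show ∑ l ∈ (I.erase m)ᶜ, extF n (j + 1) x (insert l (I.erase m)) = _
    rw [Finset.compl_erase, Finset.sum_insert (by simp [hm]),
      Finset.insert_erase hm, extF_of_card _ _ _ hI]
  rw [Finset.sum_congr rfl hL, Finset.sum_congr rfl hR]
  rw [Finset.sum_add_distrib, Finset.sum_add_distrib, Finset.sum_const, Finset.sum_const,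
    Finset.card_compl, hI, Finset.sum_comm]
  have hcard : (Fintype.card (Fin n) - (j + 1)) = n - (j + 1) := by simp
  rw [hcard]
  simp only [nsmul_eq_mul]
  rw [Nat.cast_sub hj]
  push_cast
  ring

lemma T_inj : ∀ i, 2 * i < n → ∀ μ : ℝ, 0 ≤ μ →
    ∀ x : Vs n i, Dm n i (Um n i x) + (μ : ℂ) • x = 0 → x = 0 := by
  intro i
  induction i with
  | zero =>
    intro hn μ hμ x hx
    rw [base_rel, ← add_smul] at hx
    have h0 : ((n : ℂ) + μ) = (((n + μ : ℝ)) : ℂ) := by push_cast; ring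
    have hpos : (0:ℝ) < (n : ℝ) + μ := by
      have : (0:ℝ) < n := by exact_mod_cast hn
      linarith
    have hne : ((n : ℂ) + μ) ≠ 0 := by
      rw [h0]; exact_mod_cast hpos.ne'
    have := smul_eq_zero.mp hx
    rcases this with h | h
    · exact absurd h hne
    · exact h
  | succ j ih =>
    intro hn μ hμ x hx
    have hj : j + 1 ≤ n := by omega
    rw [comm_rel j hj x] at hx
    have hc : ((n : ℂ) - 2 * (j + 1) + μ) = ((((n : ℝ) - 2 * (j + 1) + μ) : ℝ) : ℂ) := by
      push_cast; ring
    have hcpos : (0 : ℝ) < (n : ℝ) - 2 * (j + 1) + μ := by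
      have : (2 * (j + 1) : ℝ) < n := by exact_mod_cast hn
      linarith
    -- equation: Um j (Dm j x) + c • x = 0  with c = (n - 2(j+1)) + μ
    have key : Um n j (Dm n j x) + ((n : ℂ) - 2 * (j + 1) + μ) • x = 0 := by
      rw [add_smul, ← add_assoc]; exact hx
    -- apply Dm n j
    have key2 : Dm n j (Um n j (Dm n j x)) + ((n : ℂ) - 2 * (j + 1) + μ) • (Dm n j x) = 0 := by
      have := congrArg (Dm n j) key
      simpa [map_add, map_smul] using this
    have hDx : Dm n j x = 0 := by
      refine ih (by omega) ((n : ℝ) - 2 * (j + 1) + μ) (le_of_lt hcpos) _ ?_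
      rw [hc] at key2
      exact key2
    rw [hDx, map_zero, zero_add] at key
    have hne : ((n : ℂ) - 2 * (j + 1) + μ) ≠ 0 := by
      rw [hc]
      exact_mod_cast hcpos.ne'
    rcases smul_eq_zero.mp key with h | h
    · exact absurd h hne
    · exact h


def dI (n : ℕ) (I : Finset (Fin n)) : Fin n →₀ ℕ := ∑ i ∈ I, Finsupp.single i 1

lemma dI_apply (I : Finset (Fin n)) (j : Fin n) :
    dI n I j = if j ∈ I then 1 else 0 := by
  classical
  rw [dI, Finset.sum_apply']
  simp [Finsupp.single_apply, Finset.sum_ite_eq]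

lemma dI_inj : Function.Injective (dI (n := n)) := by
  intro S T h
  ext j
  have := congrArg (fun f : Fin n →₀ ℕ => f j) h
  simp only [dI_apply] at this
  by_cases hS : j ∈ S <;> by_cases hT : j ∈ T <;> simp_all

lemma xI_eq (I : Finset (Fin n)) : xI n I = monomial (dI n I) 1 := by
  classical
  induction I using Finset.induction_on with
  | empty => simp [xI, dI]
  | insert a s h ih =>
    rw [xI, Finset.prod_insert h]
    rw [show (∏ i ∈ s, (X i : MvPolynomial (Fin n) ℂ)) = xI n s from rfl, ih]
    rw [X, monomial_mul, one_mul]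
    congr 1
    simp [dI, Finset.sum_insert h]

lemma coeffI_xI (T S : Finset (Fin n)) :
    coeffI (xI n S) T = if S = T then 1 else 0 := by
  rw [coeffI, xI_eq]
  show coeff (dI n T) (monomial (dI n S) 1) = _
  rw [coeff_monomial]
  by_cases h : S = T
  · simp [h]
  · rw [if_neg (fun hc => h (dI_inj hc)), if_neg h]

def Phi (n k : ℕ) : Vs n k →ₗ[ℂ] MvPolynomial (Fin n) ℂ where
  toFun c := ∑ S : {S : Finset (Fin n) // S.card = k}, c S • xI n S.1
  map_add' c d := by simp [add_smul, Finset.sum_add_distrib]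
  map_smul' a c := by simp [Finset.smul_sum, smul_smul]

lemma coeffI_sum (s : Finset α) (f : α → MvPolynomial (Fin n) ℂ) (T : Finset (Fin n)) :
    coeffI (∑ a ∈ s, f a) T = ∑ a ∈ s, coeffI (f a) T := by
  simp [coeffI, MvPolynomial.coeff_sum]

lemma coeffI_smul (a : ℂ) (f : MvPolynomial (Fin n) ℂ) (T : Finset (Fin n)) :
    coeffI (a • f) T = a * coeffI f T := by
  simp [coeffI]

lemma coeffI_Phi (k : ℕ) (c : Vs n k) (T : Finset (Fin n)) :
    coeffI (Phi n k c) T = extF n k c T := by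
  classical
  show coeffI (∑ S : {S : Finset (Fin n) // S.card = k}, c S • xI n S.1) T = _
  rw [coeffI_sum]
  simp only [coeffI_smul, coeffI_xI]
  by_cases h : T.card = k
  · rw [extF_of_card _ _ _ h]
    rw [Finset.sum_eq_single ⟨T, h⟩]
    · simp
    · intro S _ hS
      rw [if_neg (fun hc => hS (Subtype.ext hc)), mul_zero]
    · intro hmem
      exact absurd (Finset.mem_univ _) hmem
  · rw [extF, dif_neg h]
    refine Finset.sum_eq_zero fun S _ => ?_
    rw [if_neg (fun hc : (S : Finset (Fin n)) = T => h (hc ▸ S.2)), mul_zero]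

lemma Phi_inj (k : ℕ) : Function.Injective (Phi n k) := by
  intro c d h
  funext S
  have := congrArg (fun f => coeffI f S.1) h
  simpa [coeffI_Phi, extF_of_card _ _ _ S.2] using this

lemma Aspace_le_range (k : ℕ) : Aspace n k ≤ LinearMap.range (Phi n k) := by
  rw [Aspace, Submodule.span_le]
  rintro f ⟨I, hI, rfl⟩
  refine ⟨Pi.single ⟨I, hI⟩ 1, ?_⟩
  show ∑ S : {S : Finset (Fin n) // S.card = k}, Pi.single ⟨I, hI⟩ 1 S • xI n S.1 = xI n I
  rw [Finset.sum_eq_single ⟨I, hI⟩]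
  · simp
  · intro S _ hS
    rw [Pi.single_eq_of_ne hS, zero_smul]
  · intro hmem
    exact absurd (Finset.mem_univ _) hmem

lemma A0_eq_map (i : ℕ) :
    A0space n (i + 1) = (LinearMap.ker (Dm n i)).map (Phi n (i + 1)) := by
  classical
  apply le_antisymm
  · rintro f ⟨hf1, hf2⟩
    obtain ⟨c, rfl⟩ := Aspace_le_range (i + 1) hf1
    refine ⟨c, ?_, rfl⟩
    simp only [SetLike.mem_coe, LinearMap.mem_ker]
    funext J
    show ∑ j ∈ J.1ᶜ, extF n (i + 1) c (insert j J.1) = 0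
    have h := hf2 J.1 J.2
    rw [← h]
    exact Finset.sum_congr rfl fun j hj => (coeffI_Phi _ _ _).symm
  · rintro f ⟨c, hc, rfl⟩
    simp only [SetLike.mem_coe, LinearMap.mem_ker] at hc
    constructor
    · show ∑ S : {S : Finset (Fin n) // S.card = i + 1}, c S • xI n S.1 ∈ Aspace n (i + 1)
      refine Submodule.sum_mem _ fun S _ => Submodule.smul_mem _ _ ?_
      exact Submodule.subset_span ⟨S.1, S.2, rfl⟩
    · intro J hJ
      have hJ' : J.card = i := hJ
      have h0 : (Dm n i) c ⟨J, hJ'⟩ = 0 := by rw [hc]; rfl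
      calc ∑ j ∈ Jᶜ, coeffI ((Phi n (i + 1)) c) (insert j J)
          = ∑ j ∈ Jᶜ, extF n (i + 1) c (insert j J) :=
            Finset.sum_congr rfl fun j _ => coeffI_Phi _ _ _
        _ = (Dm n i) c ⟨J, hJ'⟩ := rfl
        _ = 0 := h0

lemma Dm_surj (i : ℕ) (h : 2 * i < n) : Function.Surjective (Dm n i) := by
  have hT : Function.Injective (Dm n i ∘ₗ Um n i) := by
    rw [← LinearMap.ker_eq_bot, LinearMap.ker_eq_bot']
    intro x hx
    refine T_inj i h 0 le_rfl x ?_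
    simpa using hx
  have hTs : Function.Surjective (Dm n i ∘ₗ Um n i) :=
    LinearMap.surjective_of_injective hT
  intro y
  obtain ⟨x, hx⟩ := hTs y
  exact ⟨Um n i x, hx⟩

end A0Aux

/-- For `1 ≤ k` and `2k ≤ n`, the complex dimension of `A⁰_{n,k}` equals
`C(n,k) - C(n,k-1)`, the dimension of the irreducible representation of `S_n`
indexed by the two-row Young diagram `(n-k,k)`. -/
theorem finrank_A0 (n k : ℕ) (hk1 : 1 ≤ k) (hk : 2 * k ≤ n) :
    Module.finrank ℂ (A0space n k) = n.choose k - n.choose (k - 1) := by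
  obtain ⟨i, rfl⟩ : ∃ i, k = i + 1 := ⟨k - 1, by omega⟩
  rw [A0Aux.A0_eq_map i]
  have hinj := A0Aux.Phi_inj (n := n) (i + 1)
  have e := Submodule.equivMapOfInjective (A0Aux.Phi n (i + 1)) hinj
    (LinearMap.ker (A0Aux.Dm n i))
  rw [← e.finrank_eq]
  have hsurj := A0Aux.Dm_surj (n := n) i (by omega)
  have hrn := LinearMap.finrank_range_add_finrank_ker (A0Aux.Dm n i)
  rw [LinearMap.range_eq_top.mpr hsurj, finrank_top] at hrn
  have h1 : Module.finrank ℂ (A0Aux.Vs n (i + 1)) = n.choose (i + 1) := by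
    rw [Module.finrank_fintype_fun_eq_card, Fintype.card_finset_len, Fintype.card_fin]
  have h2 : Module.finrank ℂ (A0Aux.Vs n i) = n.choose i := by
    rw [Module.finrank_fintype_fun_eq_card, Fintype.card_finset_len, Fintype.card_fin]
  have h3 : (i + 1) - 1 = i := rfl
  rw [h3]
  omega

end
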